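/- arXiv:1601.01789 — 4 statements merged into one kernel-verified Lean document; each statement's English description precedes it below -/
import Mathlib

section
/- Let n ≥ 2 and let Q = (E_0, E_1, …, E_n; γ_i, δ_i) be an object of 𝒜_n. Define F_0 := E_0^* (the linear dual), F_i := (E_{n+1−i})^* for i = 1, …, n, and linear maps γ̃_i := (δ_{n+1−i})^* : F_0 → F_i and δ̃_i := (γ_{n+1−i})^* : F_i → F_0. Then Q^* := (F_0, F_1, …, F_n; γ̃_i, δ̃_i) is again an object of 𝒜_n, and its fractional monodromies satisfy T̃_i = (T_{n−i})^* (indices modulo n). -/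
/-!
STATEMENT 1: the dual of an object of `𝒜_n` (`n ≥ 2`) is again an object of `𝒜_n`,
and its fractional monodromies are the duals of those of the original object.

An object of `𝒜_n` is a collection of finite-dimensional `k`-vector spaces `E₀`
(vertex space) and `E i`, `i ∈ ℤ/n` (edge spaces, the paper's `E_1, …, E_n`,
indices mod `n`), with linear maps `γ i : E₀ → E i`, `δ i : E i → E₀` satisfying
(C1) `γᵢ ∘ δᵢ = id`, (C2) `Tᵢ := γ_{i+1} ∘ δᵢ : Eᵢ → E_{i+1}` bijective,
(C3) `γᵢ ∘ δⱼ = 0` for `i ≠ j, j + 1`.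

The dual object has `F₀ := E₀^*`, `Fᵢ := (E_{n+1−i})^* = (E_{1−i})^*`,
`γ̃ᵢ := (δ_{1−i})^*` and `δ̃ᵢ := (γ_{1−i})^*`.  The theorem asserts that these data
again satisfy (C1), (C2), (C3), and that `T̃ᵢ = (T_{n−i})^* = (T_{−i})^*`
(the last equation is stated with `HEq` since the source and target spaces
`(E_{1−(i+1)})^*` and `(E_{−i})^*` are equal only after the index identification
`1 − (i+1) = −i` in `ℤ/n`).
-/

structure AObj (k : Type) [Field k] (n : ℕ) : Type 1 where
  V : Type
  [addV : AddCommGroup V]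
  [modV : Module k V]
  [fdV : FiniteDimensional k V]
  E : ZMod n → Type
  [addE : ∀ i, AddCommGroup (E i)]
  [modE : ∀ i, Module k (E i)]
  [fdE : ∀ i, FiniteDimensional k (E i)]
  γ : ∀ i : ZMod n, V →ₗ[k] E i
  δ : ∀ i : ZMod n, E i →ₗ[k] V
  c1 : ∀ i, (γ i).comp (δ i) = LinearMap.id
  c2 : ∀ i, Function.Bijective ((γ (i + 1)).comp (δ i))
  c3 : ∀ i j : ZMod n, i ≠ j → i ≠ j + 1 → (γ i).comp (δ j) = 0

attribute [instance] AObj.addV AObj.modV AObj.fdV AObj.addE AObj.modE AObj.fdE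

theorem dual_mem_A (k : Type) [Field k] (n : ℕ) (hn : 2 ≤ n) (Q : AObj k n) :
    -- (C1) for the dual data: `γ̃ᵢ ∘ δ̃ᵢ = id` on `Fᵢ = (E_{1−i})^*`
    (∀ i : ZMod n,
      ((Q.δ (1 - i)).dualMap).comp ((Q.γ (1 - i)).dualMap) = LinearMap.id) ∧
    -- (C2) for the dual data: `T̃ᵢ = γ̃_{i+1} ∘ δ̃ᵢ` is an isomorphism
    (∀ i : ZMod n,
      Function.Bijective (((Q.δ (1 - (i + 1))).dualMap).comp ((Q.γ (1 - i)).dualMap))) ∧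
    -- (C3) for the dual data: `γ̃ᵢ ∘ δ̃ⱼ = 0` for `i ≠ j, j + 1`
    (∀ i j : ZMod n, i ≠ j → i ≠ j + 1 →
      ((Q.δ (1 - i)).dualMap).comp ((Q.γ (1 - j)).dualMap) = 0) ∧
    -- the fractional monodromies of the dual: `T̃ᵢ = (T_{n−i})^*`, where
    -- `T_{n−i} = T_{−i} = γ_{−i+1} ∘ δ_{−i}`
    (∀ i : ZMod n,
      HEq (((Q.δ (1 - (i + 1))).dualMap).comp ((Q.γ (1 - i)).dualMap))
        (((Q.γ (-i + 1)).comp (Q.δ (-i))).dualMap)) := by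
  refine ⟨fun i => ?_, fun i => ?_, fun i j hij hij' => ?_, fun i => ?_⟩
  · rw [LinearMap.dualMap_comp_dualMap, Q.c1, LinearMap.dualMap_id]
  · rw [show (1 : ZMod n) - (i + 1) = -i from by ring,
      show (1 : ZMod n) - i = -i + 1 from by ring,
      LinearMap.dualMap_comp_dualMap]
    exact LinearMap.dualMap_bijective_iff.mpr (Q.c2 (-i))
  · rw [LinearMap.dualMap_comp_dualMap, Q.c3 (1 - j) (1 - i)
      (fun h => hij (by linear_combination h)) (fun h => hij' (by linear_combination h))]
    ext x y; simp
  · rw [show (1 : ZMod n) - (i + 1) = -i from by ring,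
      show (1 : ZMod n) - i = -i + 1 from by ring,
      LinearMap.dualMap_comp_dualMap]
end

section
/- Let n ≥ 2 and let 1_* : 𝒜_n → 𝒜_n be the rotation automorphism sending Q = (E_0, E_1, …, E_n; γ_i, δ_i) to (E_0, E_2, …, E_{n+1}; γ_{i+1}, δ_{i+1}) (indices other than 0 modulo n). Then there exists a natural isomorphism β_1 : Id_{𝒜_n} ≅ 1_* whose component at each object Q has edge maps given by the fractional monodromies, i.e., the i-th component of β_1(Q) : Q → 1_*Q is T_i = γ_{i+1} ∘ δ_i : E_i → E_{i+1} for i = 1, …, n (together with a suitable isomorphism E_0 → E_0 as vertex component). Consequently, setting β_k := (β_1)^k for k ∈ ℤ, the strict action of ℤ on 𝒜_n obtained by composing the projection ℤ → ℤ/n with k ↦ k_* is coboundary: β_0 = id and β_{k+l} = (k_* β_l) ∘ β_k for all k, l ∈ ℤ. -/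
/-!
The vertex component of `β₁` is `u = ∑ᵢ δᵢ γᵢ - 1`. Against `γ_{i+1}` or `δᵢ`, conditions (C1)
and (C3) kill every term of the sum except `j = i, i + 1`, which gives `γ_{i+1} u = Tᵢ γᵢ` and
`u δᵢ = δ_{i+1} Tᵢ`. So `u` conjugates the idempotent `δᵢ γᵢ` into `δ_{i+1} γ_{i+1}`, and it is
invertible: if `u x = 0` then every `Tᵢ γᵢ x` vanishes, so by (C2) every `γᵢ x` does, and then
`u x = -x`.

A morphism of `𝒜_n` is determined by its vertex component (`fᵢ = γ'ᵢ f₀ δᵢ`), and a linear map of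
vertex spaces is the vertex component of a morphism exactly when it intertwines the idempotents
`δᵢ γᵢ`. Hence `u^m` is the vertex component of an isomorphism `Q ≅ m_* Q`, natural in `Q`, and
the coboundary identities reduce to `u^0 = 1` and `u^(p+q) = u^q u^p`.
-/

open CategoryTheory

variable {k : Type} [Field k] {n : ℕ}

/-- A morphism in `𝒜_n`: linear maps on vertex and edge spaces commuting with the
structure maps `γ` and `δ`. -/
@[ext]
structure AHom (Q Q' : AObj k n) where
  f₀ : Q.V →ₗ[k] Q'.V
  f : ∀ i, Q.E i →ₗ[k] Q'.E i
  commγ : ∀ i, (f i).comp (Q.γ i) = (Q'.γ i).comp f₀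
  commδ : ∀ i, f₀.comp (Q.δ i) = (Q'.δ i).comp (f i)

theorem AHom.γ_apply {Q Q' : AObj k n} (φ : AHom Q Q') (i : ZMod n) (x : Q.V) :
    φ.f i (Q.γ i x) = Q'.γ i (φ.f₀ x) := LinearMap.congr_fun (φ.commγ i) x

theorem AHom.δ_apply {Q Q' : AObj k n} (φ : AHom Q Q') (i : ZMod n) (x : Q.E i) :
    φ.f₀ (Q.δ i x) = Q'.δ i (φ.f i x) := LinearMap.congr_fun (φ.commδ i) x

instance : Category (AObj k n) where
  Hom := AHom
  id Q :=
    { f₀ := LinearMap.id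
      f := fun _ => LinearMap.id
      commγ := fun i => by ext x; simp
      commδ := fun i => by ext x; simp }
  comp φ ψ :=
    { f₀ := ψ.f₀.comp φ.f₀
      f := fun i => (ψ.f i).comp (φ.f i)
      commγ := fun i => by ext x; simp [AHom.γ_apply]
      commδ := fun i => by ext x; simp [AHom.δ_apply] }
  id_comp φ := by apply AHom.ext <;> ext x <;> simp
  comp_id φ := by apply AHom.ext <;> ext x <;> simp
  assoc φ ψ χ := by apply AHom.ext <;> ext x <;> simp

/-- The rotation of an object of `𝒜_n` by `a ∈ ℤ/n`:
`a_*Q = (E₀, E_{1+a}, …, E_{n+a}; γ_{i+a}, δ_{i+a})`. -/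
def rotObj (a : ZMod n) (Q : AObj k n) : AObj k n where
  V := Q.V
  E i := Q.E (i + a)
  γ i := Q.γ (i + a)
  δ i := Q.δ (i + a)
  c1 i := Q.c1 (i + a)
  c2 i := by
    have h := Q.c2 (i + a)
    have e : i + a + 1 = i + 1 + a := add_right_comm i a 1
    rw [e] at h
    exact h
  c3 i j hij hij' := by
    have e : j + a + 1 = j + 1 + a := add_right_comm j a 1
    refine Q.c3 (i + a) (j + a) (fun hc => hij (add_right_cancel hc))
      (fun hc => hij' ?_)
    rw [e] at hc
    exact add_right_cancel hc

/-- The rotation by `a ∈ ℤ/n` as a functor `a_* : 𝒜_n ⥤ 𝒜_n`. -/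
def rot (k : Type) [Field k] (n : ℕ) (a : ZMod n) : AObj k n ⥤ AObj k n where
  obj Q := rotObj a Q
  map {Q Q'} φ :=
    { f₀ := φ.f₀
      f := fun i => φ.f (i + a)
      commγ := fun i => φ.commγ (i + a)
      commδ := fun i => φ.commδ (i + a) }
  map_id Q := rfl
  map_comp φ ψ := rfl

/-- The strict action of `ℤ` on `𝒜_n` obtained by composing the projection
`ℤ → ℤ/n` with `a ↦ a_*`. -/
def rotZ (k : Type) [Field k] (n : ℕ) (m : ℤ) : AObj k n ⥤ AObj k n :=
  rot k n ((m : ZMod n))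


theorem SemiconjBy.units_zpow_of_shift {M A : Type*} [Monoid M] [AddCommGroup A] (u : Mˣ)
    (P : A → M) (a : A) (h : ∀ i, SemiconjBy (u : M) (P i) (P (i + a))) (m : ℤ) (i : A) :
    SemiconjBy ↑(u ^ m) (P i) (P (i + m • a)) := by
  induction m using Int.induction_on generalizing i with
  | zero => simp
  | succ m ih =>
    have e : i + ((m : ℤ) + 1) • a = i + a + (m : ℤ) • a := by
      rw [add_zsmul, one_zsmul]; abel
    rw [zpow_add_one, Units.val_mul, e]
    exact (ih (i + a)).mul_left (h i)
  | pred m ih =>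
    have h' : SemiconjBy ↑u⁻¹ (P i) (P (i - a)) := by
      simpa using (h (i - a)).units_inv_symm_left
    have e : i + (-(m : ℤ) - 1) • a = i - a + (-(m : ℤ)) • a := by
      rw [sub_zsmul, one_zsmul]; abel
    rw [zpow_sub_one, Units.val_mul, e]
    exact (ih (i - a)).mul_left h'

theorem LinearMap.comp_units_zpow {R M N : Type*} [Semiring R] [AddCommMonoid M]
    [AddCommMonoid N] [Module R M] [Module R N] (f : M →ₗ[R] N) {u : (Module.End R M)ˣ}
    {v : (Module.End R N)ˣ} (h : f ∘ₗ ↑u = ↑v ∘ₗ f) (m : ℤ) :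
    f ∘ₗ ↑(u ^ m) = ↑(v ^ m) ∘ₗ f := by
  have h' : f ∘ₗ ↑u⁻¹ = ↑v⁻¹ ∘ₗ f := calc
    f ∘ₗ ↑u⁻¹ = (↑v⁻¹ * ↑v : Module.End R N) ∘ₗ f ∘ₗ ↑u⁻¹ := by
      simp [Module.End.one_eq_id]
    _ = ↑v⁻¹ ∘ₗ f ∘ₗ (↑u * ↑u⁻¹ : Module.End R M) := by
      simp only [Module.End.mul_eq_comp, LinearMap.comp_assoc]
      rw [← LinearMap.comp_assoc (↑u⁻¹ : Module.End R M), ← h, LinearMap.comp_assoc]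
    _ = ↑v⁻¹ ∘ₗ f := by simp [Module.End.one_eq_id]
  induction m using Int.induction_on with
  | zero => simp [Module.End.one_eq_id]
  | succ m ih =>
    simp only [zpow_add_one, Units.val_mul, Module.End.mul_eq_comp, ← LinearMap.comp_assoc, ih]
    rw [LinearMap.comp_assoc, h, LinearMap.comp_assoc]
  | pred m ih =>
    simp only [zpow_sub_one, Units.val_mul, Module.End.mul_eq_comp, ← LinearMap.comp_assoc, ih]
    rw [LinearMap.comp_assoc, h', LinearMap.comp_assoc]

theorem LinearMap.comp_finsetSum {R M N P ι : Type*} [CommSemiring R] [AddCommMonoid M]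
    [AddCommMonoid N] [AddCommMonoid P] [Module R M] [Module R N] [Module R P] (s : Finset ι)
    (g : N →ₗ[R] P) (f : ι → M →ₗ[R] N) : g ∘ₗ ∑ i ∈ s, f i = ∑ i ∈ s, g ∘ₗ f i :=
  map_sum (LinearMap.llcomp R M N P g) f s

theorem LinearMap.finsetSum_comp {R M N P ι : Type*} [CommSemiring R] [AddCommMonoid M]
    [AddCommMonoid N] [AddCommMonoid P] [Module R M] [Module R N] [Module R P] (s : Finset ι)
    (f : ι → N →ₗ[R] P) (g : M →ₗ[R] N) : (∑ i ∈ s, f i) ∘ₗ g = ∑ i ∈ s, f i ∘ₗ g :=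
  map_sum (LinearMap.lcomp R P g) f s

namespace AObj

variable (Q : AObj k n)

def proj (i : ZMod n) : Module.End k Q.V := Q.δ i ∘ₗ Q.γ i

lemma γ_comp_proj (i : ZMod n) : Q.γ i ∘ₗ Q.proj i = Q.γ i := by
  rw [proj, ← LinearMap.comp_assoc, Q.c1, LinearMap.id_comp]

lemma proj_comp_δ (i : ZMod n) : Q.proj i ∘ₗ Q.δ i = Q.δ i := by
  rw [proj, LinearMap.comp_assoc, Q.c1, LinearMap.comp_id]

end AObj

namespace AHom

variable {Q Q' Q'' : AObj k n}

@[simp] lemma comp_f₀ (φ : Q ⟶ Q') (ψ : Q' ⟶ Q'') : (φ ≫ ψ).f₀ = ψ.f₀ ∘ₗ φ.f₀ := rfl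

lemma eqToHom_f₀ (h : Q = Q') : HEq (eqToHom h).f₀ (LinearMap.id : Q.V →ₗ[k] Q.V) := by
  subst h; rfl

lemma f_eq (φ : AHom Q Q') (i : ZMod n) : φ.f i = Q'.γ i ∘ₗ φ.f₀ ∘ₗ Q.δ i := by
  rw [← LinearMap.comp_assoc, ← φ.commγ, LinearMap.comp_assoc, Q.c1, LinearMap.comp_id]

lemma ext_f₀ {φ ψ : Q ⟶ Q'} (h : φ.f₀ = ψ.f₀) : φ = ψ :=
  AHom.ext h (funext fun i => by rw [f_eq φ, f_eq ψ, h])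

lemma f₀_comp_proj (φ : AHom Q Q') (i : ZMod n) :
    φ.f₀ ∘ₗ Q.proj i = Q'.proj i ∘ₗ φ.f₀ := by
  rw [AObj.proj, AObj.proj, ← LinearMap.comp_assoc, φ.commδ, LinearMap.comp_assoc, φ.commγ,
    LinearMap.comp_assoc]

def ofVertex (g : Q.V →ₗ[k] Q'.V) (hg : ∀ i, g ∘ₗ Q.proj i = Q'.proj i ∘ₗ g) : AHom Q Q' where
  f₀ := g
  f i := Q'.γ i ∘ₗ g ∘ₗ Q.δ i
  commγ i := by
    change Q'.γ i ∘ₗ (g ∘ₗ Q.proj i) = _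
    rw [hg, ← LinearMap.comp_assoc, Q'.γ_comp_proj]
  commδ i := by
    change _ = (Q'.proj i ∘ₗ g) ∘ₗ Q.δ i
    rw [← hg, LinearMap.comp_assoc, Q.proj_comp_δ]

end AHom

lemma natTrans_ext_f₀ {C : Type*} [Category C] {F G : C ⥤ AObj k n} {α β : F ⟶ G}
    (h : ∀ X, (α.app X).f₀ = (β.app X).f₀) : α = β :=
  NatTrans.ext (funext fun X => AHom.ext_f₀ (h X))

namespace AObj

variable {Q Q' : AObj k n}

def isoOfVertex (g : Q.V ≃ₗ[k] Q'.V)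
    (hg : ∀ i, g.toLinearMap ∘ₗ Q.proj i = Q'.proj i ∘ₗ g) : Q ≅ Q' where
  hom := AHom.ofVertex g hg
  inv := AHom.ofVertex g.symm fun i => by
    ext x
    apply g.injective
    simpa using (LinearMap.congr_fun (hg i) (g.symm x)).symm
  hom_inv_id := AHom.ext_f₀ g.symm_comp
  inv_hom_id := AHom.ext_f₀ g.comp_symm

end AObj

/-- Rotations are the reindexings along translations; allowing any translation-equivariant `σ`
lets the identities `rot_comp` and `rot_zero` reduce to equalities of index maps. -/
def reindexEdges (k : Type) [Field k] (n : ℕ) (σ : ZMod n → ZMod n)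
    (hσ : ∀ i j, σ (i + j) = σ i + j) : AObj k n ⥤ AObj k n where
  obj Q :=
    { V := Q.V
      E i := Q.E (σ i)
      γ i := Q.γ (σ i)
      δ i := Q.δ (σ i)
      c1 i := Q.c1 (σ i)
      c2 i := hσ i 1 ▸ Q.c2 (σ i)
      c3 i j hij hij' := by
        have hσ₀ : ∀ i, σ i = σ 0 + i := fun i => by simpa using hσ 0 i
        have hinj : Function.Injective σ := fun i j h => by
          rwa [hσ₀ i, hσ₀ j, add_right_inj] at h
        exact Q.c3 _ _ (hinj.ne hij) (fun h => hij' (hinj (h.trans (hσ j 1).symm))) }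
  map φ :=
    { f₀ := φ.f₀
      f i := φ.f (σ i)
      commγ i := φ.commγ (σ i)
      commδ i := φ.commδ (σ i) }

lemma reindexEdges_congr {σ τ : ZMod n → ZMod n} (h : σ = τ) (hσ : ∀ i j, σ (i + j) = σ i + j)
    (hτ : ∀ i j, τ (i + j) = τ i + j) : reindexEdges k n σ hσ = reindexEdges k n τ hτ := by
  subst h; rfl

lemma rot_comp (a b : ZMod n) : rot k n a ⋙ rot k n b = rot k n (a + b) :=
  reindexEdges_congr (σ := fun i => i + b + a) (funext fun i => by abel) (fun i j => by abel)
    (fun i j => add_right_comm i j (a + b))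

lemma rot_zero : rot k n 0 = 𝟭 (AObj k n) :=
  reindexEdges_congr (τ := id) (funext add_zero) (fun i j => add_right_comm i j 0)
    (fun _ _ => rfl)

namespace AObj

variable [NeZero n] (Q : AObj k n)

def vertexShift : Module.End k Q.V := ∑ i, Q.proj i - 1

lemma _root_.AHom.f₀_comp_vertexShift {Q Q' : AObj k n} (φ : AHom Q Q') :
    φ.f₀ ∘ₗ Q.vertexShift = Q'.vertexShift ∘ₗ φ.f₀ := by
  simp only [vertexShift, LinearMap.comp_sub, LinearMap.sub_comp, LinearMap.comp_finsetSum,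
    LinearMap.finsetSum_comp, φ.f₀_comp_proj, Module.End.one_eq_id, LinearMap.comp_id,
    LinearMap.id_comp]

variable [Nontrivial (ZMod n)]

lemma γ_comp_vertexShift (i : ZMod n) :
    Q.γ (i + 1) ∘ₗ Q.vertexShift = (Q.γ (i + 1) ∘ₗ Q.δ i) ∘ₗ Q.γ i := by
  have hsum : ∑ j, Q.γ (i + 1) ∘ₗ Q.proj j
      = Q.γ (i + 1) ∘ₗ Q.proj i + Q.γ (i + 1) ∘ₗ Q.proj (i + 1) := by
    refine Fintype.sum_eq_add _ _ (by simp) fun j ⟨hj, hj'⟩ => ?_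
    rw [proj, ← LinearMap.comp_assoc,
      Q.c3 _ _ (Ne.symm hj') (fun h => hj (add_right_cancel h).symm), LinearMap.zero_comp]
  rw [vertexShift, LinearMap.comp_sub, LinearMap.comp_finsetSum, hsum, γ_comp_proj,
    Module.End.one_eq_id, LinearMap.comp_id, add_sub_cancel_right, proj, LinearMap.comp_assoc]

lemma vertexShift_comp_δ (i : ZMod n) :
    Q.vertexShift ∘ₗ Q.δ i = Q.δ (i + 1) ∘ₗ (Q.γ (i + 1) ∘ₗ Q.δ i) := by
  have hsum : ∑ j, Q.proj j ∘ₗ Q.δ i = Q.proj i ∘ₗ Q.δ i + Q.proj (i + 1) ∘ₗ Q.δ i := by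
    refine Fintype.sum_eq_add _ _ (by simp) fun j ⟨hj, hj'⟩ => ?_
    rw [proj, LinearMap.comp_assoc, Q.c3 _ _ hj hj', LinearMap.comp_zero]
  rw [vertexShift, LinearMap.sub_comp, LinearMap.finsetSum_comp, hsum, proj_comp_δ,
    Module.End.one_eq_id, LinearMap.id_comp, add_sub_cancel_left, proj, LinearMap.comp_assoc]

lemma semiconjBy_vertexShift_proj (i : ZMod n) :
    SemiconjBy Q.vertexShift (Q.proj i) (Q.proj (i + 1)) := by
  change Q.vertexShift ∘ₗ (Q.δ i ∘ₗ Q.γ i) = (Q.δ (i + 1) ∘ₗ Q.γ (i + 1)) ∘ₗ Q.vertexShift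
  rw [← LinearMap.comp_assoc, vertexShift_comp_δ,
    LinearMap.comp_assoc Q.vertexShift (Q.γ (i + 1)), γ_comp_vertexShift]
  rfl

lemma isUnit_vertexShift : IsUnit Q.vertexShift := by
  rw [LinearMap.isUnit_iff_ker_eq_bot, LinearMap.ker_eq_bot']
  intro x hx
  have hγ : ∀ i, Q.γ i x = 0 := fun i =>
    (Q.c2 i).injective <| by
      simpa [hx] using (LinearMap.congr_fun (Q.γ_comp_vertexShift i) x).symm
  have : Q.vertexShift x = -x := by
    simp [vertexShift, proj, LinearMap.sum_apply, hγ]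
  simpa [hx] using this

noncomputable def vertexShiftUnit : (Module.End k Q.V)ˣ := Q.isUnit_vertexShift.unit

lemma semiconjBy_vertexShiftUnit_zpow_proj (m : ℤ) (i : ZMod n) :
    SemiconjBy ↑(Q.vertexShiftUnit ^ m) (Q.proj i) (Q.proj (i + m)) := by
  simpa using SemiconjBy.units_zpow_of_shift Q.vertexShiftUnit Q.proj 1
    (fun i => by simpa [vertexShiftUnit] using Q.semiconjBy_vertexShift_proj i) m i

noncomputable def monodromyIso (m : ℤ) (a : ZMod n) (ha : (m : ZMod n) = a) :
    Q ≅ (rot k n a).obj Q :=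
  isoOfVertex (LinearMap.GeneralLinearGroup.toLinearEquiv (Q.vertexShiftUnit ^ m)) fun i => by
    subst ha
    exact Q.semiconjBy_vertexShiftUnit_zpow_proj m i

lemma monodromyIso_hom_f₀ (m : ℤ) (a : ZMod n) (ha : (m : ZMod n) = a) :
    (Q.monodromyIso m a ha).hom.f₀ = (Q.vertexShiftUnit ^ m).val := rfl

lemma monodromyIso_one_hom_f (h : ((1 : ℤ) : ZMod n) = 1) (i : ZMod n) :
    (Q.monodromyIso 1 1 h).hom.f i = Q.γ (i + 1) ∘ₗ Q.δ i := by
  rw [AHom.f_eq, monodromyIso_hom_f₀, zpow_one, vertexShiftUnit, IsUnit.unit_spec]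
  change Q.γ (i + 1) ∘ₗ Q.vertexShift ∘ₗ Q.δ i = _
  rw [vertexShift_comp_δ, ← LinearMap.comp_assoc, Q.c1, LinearMap.id_comp]

end AObj

noncomputable def monodromyNatIso (k : Type) [Field k] (n : ℕ) [NeZero n] [Nontrivial (ZMod n)]
    (m : ℤ) (a : ZMod n) (ha : (m : ZMod n) = a) : 𝟭 (AObj k n) ≅ rot k n a :=
  NatIso.ofComponents (fun Q => Q.monodromyIso m a ha) fun ψ => AHom.ext_f₀
    (ψ.f₀.comp_units_zpow (by simpa [AObj.vertexShiftUnit] using ψ.f₀_comp_vertexShift) m).symm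

variable [NeZero n] [Nontrivial (ZMod n)]

lemma monodromyNatIso_hom_app_f₀ (m : ℤ) (a : ZMod n) (ha : (m : ZMod n) = a) (Q : AObj k n) :
    ((monodromyNatIso k n m a ha).hom.app Q).f₀ = (Q.vertexShiftUnit ^ m).val := rfl

lemma monodromyNatIso_hom_congr (m : ℤ) (a b : ZMod n) (ha : (m : ZMod n) = a)
    (hb : (m : ZMod n) = b) (h : rot k n a = rot k n b) :
    (monodromyNatIso k n m b hb).hom = (monodromyNatIso k n m a ha).hom ≫ eqToHom h := by
  subst ha hb
  simp

lemma monodromyNatIso_zero_hom (h : 𝟭 (AObj k n) = rot k n ((0 : ℤ) : ZMod n)) :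
    (monodromyNatIso k n 0 _ rfl).hom = eqToHom h := natTrans_ext_f₀ fun Q => by
  rw [eqToHom_app, eq_of_heq (AHom.eqToHom_f₀ (Functor.congr_obj h Q)),
    monodromyNatIso_hom_app_f₀, zpow_zero, Units.val_one, Module.End.one_eq_id]

lemma monodromyNatIso_add_hom (p q : ℤ)
    (h : rot k n (q : ZMod n) ⋙ rot k n (p : ZMod n) = rot k n ((p + q : ℤ) : ZMod n)) :
    (monodromyNatIso k n (p + q) _ rfl).hom = (monodromyNatIso k n p _ rfl).hom ≫
      Functor.whiskerRight (monodromyNatIso k n q _ rfl).hom (rot k n p) ≫ eqToHom h :=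
  natTrans_ext_f₀ fun Q => by
    rw [NatTrans.comp_app, NatTrans.comp_app, eqToHom_app, AHom.comp_f₀, AHom.comp_f₀,
      eq_of_heq (AHom.eqToHom_f₀ (Functor.congr_obj h Q)), Functor.whiskerRight_app]
    change (Q.vertexShiftUnit ^ (p + q)).val
      = (Q.vertexShiftUnit ^ q).val ∘ₗ (Q.vertexShiftUnit ^ p).val
    rw [add_comm, zpow_add, Units.val_mul, Module.End.mul_eq_comp]

theorem coboundary_action (k : Type) [Field k] (n : ℕ) (hn : 2 ≤ n) :
    ∃ (β₁ : 𝟭 (AObj k n) ≅ rot k n (1 : ZMod n))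
      (β : ∀ m : ℤ, 𝟭 (AObj k n) ≅ rotZ k n m),
      -- the edge components of `β₁` at any object `Q` are the fractional
      -- monodromies `Tᵢ = γ_{i+1} ∘ δᵢ : Eᵢ → E_{i+1}`
      (∀ (Q : AObj k n) (i : ZMod n),
        (β₁.hom.app Q).f i = (Q.γ (i + 1)).comp (Q.δ i)) ∧
      -- `β 1` is `β₁` (transported along `(1 : ℤ)_* = (1 : ℤ/n)_*`)
      (∃ h1 : rot k n (1 : ZMod n) = rotZ k n 1,
        (β 1).hom = β₁.hom ≫ eqToHom h1) ∧
      -- `β 0` is the identity (transported along `Id = 0_*`)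
      (∃ h0 : 𝟭 (AObj k n) = rotZ k n 0, (β 0).hom = eqToHom h0) ∧
      -- the coboundary property `β_{p+q} = (p_* β_q) ∘ β_p`
      (∀ p q : ℤ, ∃ hpq : rotZ k n q ⋙ rotZ k n p = rotZ k n (p + q),
        (β (p + q)).hom =
          (β p).hom ≫ Functor.whiskerRight (β q).hom (rotZ k n p) ≫ eqToHom hpq) := by
  have : NeZero n := ⟨by omega⟩
  have : Fact (1 < n) := ⟨hn⟩
  have h1 : rot k n 1 = rotZ k n 1 := congrArg (rot k n) Int.cast_one.symm
  have h0 : 𝟭 (AObj k n) = rotZ k n 0 :=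
    rot_zero.symm.trans (congrArg (rot k n) Int.cast_zero.symm)
  have hpq (p q : ℤ) : rotZ k n q ⋙ rotZ k n p = rotZ k n (p + q) :=
    (rot_comp _ _).trans (congrArg (rot k n) (by push_cast; ring))
  exact ⟨monodromyNatIso k n 1 1 Int.cast_one, fun m => monodromyNatIso k n m m rfl,
    fun Q i => Q.monodromyIso_one_hom_f Int.cast_one i,
    ⟨h1, monodromyNatIso_hom_congr _ _ _ _ _ h1⟩, ⟨h0, monodromyNatIso_zero_hom h0⟩,
    fun p q => ⟨hpq p q, monodromyNatIso_add_hom p q _⟩⟩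
end

section
/- Let n ≥ 2 and let f = (f_0, f_1, …, f_n) : Q → Q' be a morphism in 𝒜_n. Then the componentwise kernels K_i := ker(f_i) ⊆ E_i (i = 0, 1, …, n), together with the restrictions of the maps γ_i and δ_i (which indeed map K_0 into K_i and K_i into K_0, respectively), form an object of 𝒜_n, and this object together with the componentwise inclusions K_i ↪ E_i is a kernel of f in the category 𝒜_n. -/
/-!
STATEMENT 6: for a morphism `φ : Q → Q′` in `𝒜_n` (`n ≥ 2`), the maps `γᵢ` and
`δᵢ` of `Q` restrict to the componentwise kernels `Kᵢ = ker(φᵢ)`, the resulting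
collection is an object of `𝒜_n`, and together with the componentwise
inclusions it is a kernel of `φ` in `𝒜_n`.  (The kernel object is produced by
an existential; its spaces are identified with the kernels `ker φ₀`, `ker φᵢ`
by linear isomorphisms through which the inclusion morphism is the subspace
inclusion; this pins down its structure maps as the restrictions of those of
`Q`.)
-/

open CategoryTheory

variable {k : Type} [Field k] {n : ℕ}

open CategoryTheory.Limits in
instance : Limits.HasZeroMorphisms (AObj k n) where
  zero Q Q' :=
    ⟨{ f₀ := 0
       f := fun _ => 0
       commγ := fun i => by ext x; simp
       commδ := fun i => by ext x; simp }⟩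
  comp_zero φ R := by apply AHom.ext <;> rfl
  zero_comp R _ _ φ := by
    apply AHom.ext
    · ext x
      show φ.f₀ 0 = 0
      simp
    · ext i x
      show φ.f i 0 = 0
      simp

open CategoryTheory.Limits in
theorem componentwise_kernel (k : Type) [Field k] (n : ℕ) (hn : 2 ≤ n)
    {Q Q' : AObj k n} (φ : Q ⟶ Q') :
    -- the `γ i` map `ker φ₀` into `ker (φ.f i)`, and the `δ i` map back
    (∀ (i : ZMod n) (x : Q.V), x ∈ LinearMap.ker φ.f₀ →
        Q.γ i x ∈ LinearMap.ker (φ.f i)) ∧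
    (∀ (i : ZMod n) (y : Q.E i), y ∈ LinearMap.ker (φ.f i) →
        Q.δ i y ∈ LinearMap.ker φ.f₀) ∧
    -- the componentwise kernels with the restricted maps form an object of `𝒜_n`
    -- which, with the componentwise inclusions, is a kernel of `φ` in `𝒜_n`
    ∃ (K : AObj k n) (ι : K ⟶ Q)
      (e₀ : K.V ≃ₗ[k] LinearMap.ker φ.f₀)
      (e : ∀ i, K.E i ≃ₗ[k] LinearMap.ker (φ.f i)),
      ι.f₀ = (LinearMap.ker φ.f₀).subtype.comp e₀.toLinearMap ∧
      (∀ i, ι.f i = (LinearMap.ker (φ.f i)).subtype.comp (e i).toLinearMap) ∧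
      ∃ w : ι ≫ φ = 0, Nonempty (IsLimit (KernelFork.ofι ι w)) := by

  have hγ : ∀ (i : ZMod n) (x : Q.V), x ∈ LinearMap.ker φ.f₀ →
      Q.γ i x ∈ LinearMap.ker (φ.f i) := by
    intro i x hx
    simp only [LinearMap.mem_ker] at hx ⊢
    rw [AHom.γ_apply, hx, map_zero]
  have hδ : ∀ (i : ZMod n) (y : Q.E i), y ∈ LinearMap.ker (φ.f i) →
      Q.δ i y ∈ LinearMap.ker φ.f₀ := by
    intro i y hy
    simp only [LinearMap.mem_ker] at hy ⊢
    rw [AHom.δ_apply, hy, map_zero]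
  refine ⟨hγ, hδ, ?_⟩
  -- the kernel object
  set K : AObj k n :=
    { V := LinearMap.ker φ.f₀
      E := fun i => LinearMap.ker (φ.f i)
      γ := fun i => (Q.γ i).restrict (hγ i)
      δ := fun i => (Q.δ i).restrict (hδ i)
      c1 := by
        intro i
        ext x
        simpa using LinearMap.congr_fun (Q.c1 i) x.1
      c2 := by
        intro i
        constructor
        · intro x y hxy
          apply Subtype.ext
          exact (Q.c2 i).injective (congrArg Subtype.val hxy)
        · rintro ⟨y, hy⟩
          obtain ⟨x, hx⟩ := (Q.c2 i).surjective y
          have hxker : x ∈ LinearMap.ker (φ.f i) := by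
            have h1 : φ.f (i + 1) ((Q.γ (i + 1)).comp (Q.δ i) x) = 0 := by
              rw [hx]; exact hy
            have h2 : (Q'.γ (i + 1)).comp (Q'.δ i) (φ.f i x) = 0 := by
              simpa [AHom.γ_apply, AHom.δ_apply] using h1
            have := (Q'.c2 i).injective (a₁ := φ.f i x) (a₂ := 0)
              (by simpa using h2)
            simpa using this
          exact ⟨⟨x, hxker⟩, Subtype.ext hx⟩
      c3 := by
        intro i j hij hij'
        ext x
        simpa using LinearMap.congr_fun (Q.c3 i j hij hij') x.1 } with hK
  -- inclusion morphism
  set ι : K ⟶ Q :=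
    { f₀ := (LinearMap.ker φ.f₀).subtype
      f := fun i => (LinearMap.ker (φ.f i)).subtype
      commγ := fun i => rfl
      commδ := fun i => rfl } with hι
  refine ⟨K, ι, LinearEquiv.refl k _, fun i => LinearEquiv.refl k _, rfl,
    fun i => rfl, ?_, ?_⟩
  · apply AHom.ext
    · ext x
      exact x.2
    · ext i x
      exact x.2
  · constructor
    let lift : ∀ (Z : AObj k n) (g : Z ⟶ Q), g ≫ φ = 0 → (Z ⟶ K) := fun Z g hg =>
      { f₀ := g.f₀.codRestrict (LinearMap.ker φ.f₀)
          (fun z => show φ.f₀ (g.f₀ z) = 0 from congrArg (fun h => h.f₀ z) hg)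
        f := fun i => (g.f i).codRestrict (LinearMap.ker (φ.f i))
          (fun z => show φ.f i (g.f i z) = 0 from congrArg (fun h => h.f i z) hg)
        commγ := fun i => by
          ext z
          exact AHom.γ_apply g i z
        commδ := fun i => by
          ext z
          exact AHom.δ_apply g i z }
    apply KernelFork.IsLimit.ofι
      (lift := fun {Z} g hg => lift Z g hg)
    · intro Z g hg
      apply AHom.ext <;> rfl
    · intro Z g hg m hm
      apply AHom.ext
      · ext z
        exact congrArg (fun h => h.f₀ z) hm
      · ext i z
        exact congrArg (fun h => h.f i z) hm
end

section
/- Let n ≥ 2 and let f = (f_0, f_1, …, f_n) : Q → Q' be a morphism in 𝒜_n. Then the componentwise cokernels C_i := E'_i / im(f_i) (i = 0, 1, …, n), together with the maps induced by γ'_i and δ'_i on the quotients, form an object of 𝒜_n, and this object together with the componentwise quotient maps E'_i → C_i is a cokernel of f in the category 𝒜_n. -/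
/-!
STATEMENT 7: for a morphism `φ : Q → Q′` in `𝒜_n` (`n ≥ 2`), the componentwise
cokernels `Cᵢ = E′ᵢ / im(φᵢ)`, with the maps induced by the `γ′ᵢ` and `δ′ᵢ` on
the quotients, form an object of `𝒜_n`, and together with the componentwise
quotient maps it is a cokernel of `φ` in `𝒜_n`.  (The cokernel object is
produced by an existential; its spaces are identified with the quotients by
linear isomorphisms through which the projection morphism is the canonical
quotient map; this pins down its structure maps as the ones induced by those
of `Q′`.)
-/

open CategoryTheory

variable {k : Type} [Field k] {n : ℕ}

open CategoryTheory.Limits in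
open Submodule in
theorem componentwise_cokernel (k : Type) [Field k] (n : ℕ) (hn : 2 ≤ n)
    {Q Q' : AObj k n} (φ : Q ⟶ Q') :
    ∃ (C : AObj k n) (π : Q' ⟶ C)
      (e₀ : C.V ≃ₗ[k] (Q'.V ⧸ LinearMap.range φ.f₀))
      (e : ∀ i, C.E i ≃ₗ[k] (Q'.E i ⧸ LinearMap.range (φ.f i))),
      π.f₀ = e₀.symm.toLinearMap.comp (LinearMap.range φ.f₀).mkQ ∧
      (∀ i, π.f i = (e i).symm.toLinearMap.comp (LinearMap.range (φ.f i)).mkQ) ∧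
      ∃ w : φ ≫ π = 0, Nonempty (IsColimit (CokernelCofork.ofπ π w)) := by
  classical
  set p₀ : Submodule k Q'.V := LinearMap.range φ.f₀ with hp₀
  set p : ∀ i : ZMod n, Submodule k (Q'.E i) := fun i => LinearMap.range (φ.f i) with hp
  have hγ : ∀ i, p₀ ≤ (p i).comap (Q'.γ i) := by
    rintro i _ ⟨x, rfl⟩
    exact ⟨Q.γ i x, (φ.γ_apply i x)⟩
  have hδ : ∀ i, p i ≤ p₀.comap (Q'.δ i) := by
    rintro i _ ⟨x, rfl⟩
    exact ⟨Q.δ i x, (φ.δ_apply i x)⟩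
  let γC : ∀ i : ZMod n, (Q'.V ⧸ p₀) →ₗ[k] (Q'.E i ⧸ p i) :=
    fun i => mapQ p₀ (p i) (Q'.γ i) (hγ i)
  let δC : ∀ i : ZMod n, (Q'.E i ⧸ p i) →ₗ[k] (Q'.V ⧸ p₀) :=
    fun i => mapQ (p i) p₀ (Q'.δ i) (hδ i)
  have hT : ∀ (i : ZMod n) (x : Q.E i),
      Q'.γ (i + 1) (Q'.δ i (φ.f i x)) = φ.f (i + 1) (Q.γ (i + 1) (Q.δ i x)) := by
    intro i x
    rw [← φ.δ_apply, ← φ.γ_apply]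
  let C : AObj k n :=
    { V := Q'.V ⧸ p₀
      E := fun i => Q'.E i ⧸ p i
      γ := γC
      δ := δC
      c1 := by
        intro i
        apply linearMap_qext
        ext x
        simp only [LinearMap.comp_apply, mkQ_apply, mapQ_apply, γC, δC, LinearMap.id_apply]
        exact congrArg _ (LinearMap.congr_fun (Q'.c1 i) x)
      c2 := by
        intro i
        constructor
        · rw [← LinearMap.ker_eq_bot, eq_bot_iff]
          intro a ha
          obtain ⟨x, rfl⟩ := (p i).mkQ_surjective a
          rw [LinearMap.mem_ker, LinearMap.comp_apply, mkQ_apply, mapQ_apply, mapQ_apply,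
            Quotient.mk_eq_zero] at ha
          obtain ⟨y, hy⟩ := ha
          obtain ⟨z, hz⟩ := (Q.c2 i).2 y
          have : φ.f (i + 1) ((Q.γ (i + 1)).comp (Q.δ i) z)
              = Q'.γ (i + 1) (Q'.δ i x) := by rw [hz]; exact hy
          rw [LinearMap.comp_apply, ← hT] at this
          have hx : φ.f i z = x := (Q'.c2 i).1 this
          rw [mem_bot, mkQ_apply, Quotient.mk_eq_zero]
          exact ⟨z, hx⟩
        · intro b
          obtain ⟨y, rfl⟩ := (p (i + 1)).mkQ_surjective b
          obtain ⟨x, hx⟩ := (Q'.c2 i).2 y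
          refine ⟨(p i).mkQ x, ?_⟩
          rw [LinearMap.comp_apply, mkQ_apply, mapQ_apply, mapQ_apply]
          exact congrArg _ hx
      c3 := by
        intro i j hij hij1
        apply linearMap_qext
        ext x
        simp only [LinearMap.comp_apply, mkQ_apply, mapQ_apply, γC, δC,
          LinearMap.zero_apply]
        rw [show Q'.γ i (Q'.δ j x) = 0 from LinearMap.congr_fun (Q'.c3 i j hij hij1) x]
        simp }
  let π : Q' ⟶ C :=
    { f₀ := p₀.mkQ
      f := fun i => (p i).mkQ
      commγ := fun i => (mapQ_mkQ (p := p₀) (q := p i) (Q'.γ i) (h := hγ i)).symm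
      commδ := fun i => (mapQ_mkQ (p := p i) (q := p₀) (Q'.δ i) (h := hδ i)).symm }
  have w : φ ≫ π = 0 := by
    apply AHom.ext
    · ext x
      show p₀.mkQ (φ.f₀ x) = 0
      rw [mkQ_apply, Quotient.mk_eq_zero]
      exact ⟨x, rfl⟩
    · ext i x
      show (p i).mkQ (φ.f i x) = 0
      rw [mkQ_apply, Quotient.mk_eq_zero]
      exact ⟨x, rfl⟩
  refine ⟨C, π, LinearEquiv.refl k _, fun i => LinearEquiv.refl k _, ?_, ?_, w, ?_⟩
  · ext x; rfl
  · intro i; ext x; rfl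
  refine ⟨Cofork.IsColimit.mk _ (fun s => ?_) (fun s => ?_) (fun s m hm => ?_)⟩
  case refine_1 =>
    -- the descended morphism
    have hcond : φ ≫ s.π = 0 := by
      have := s.condition
      rwa [zero_comp] at this
    have h₀ : p₀ ≤ LinearMap.ker s.π.f₀ := by
      rintro _ ⟨x, rfl⟩
      show s.π.f₀ (φ.f₀ x) = 0
      exact LinearMap.congr_fun (congrArg AHom.f₀ hcond) x
    have h : ∀ i, p i ≤ LinearMap.ker (s.π.f i) := by
      rintro i _ ⟨x, rfl⟩
      show s.π.f i (φ.f i x) = 0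
      exact LinearMap.congr_fun (congrFun (congrArg AHom.f hcond) i) x
    exact
      { f₀ := p₀.liftQ s.π.f₀ h₀
        f := fun i => (p i).liftQ (s.π.f i) (h i)
        commγ := by
          intro i
          apply linearMap_qext
          ext x
          simp only [LinearMap.comp_apply, mkQ_apply, mapQ_apply, liftQ_apply, γC]
          exact (s.π).γ_apply i x
        commδ := by
          intro i
          apply linearMap_qext
          ext x
          simp only [LinearMap.comp_apply, mkQ_apply, mapQ_apply, liftQ_apply, δC]
          exact (s.π).δ_apply i x }
  case refine_2 =>
    apply AHom.ext
    · ext x; rfl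
    · ext i x; rfl
  case refine_3 =>
    apply AHom.ext
    · apply linearMap_qext
      ext x
      have := LinearMap.congr_fun (congrArg AHom.f₀ hm) x
      exact this
    · funext i
      apply linearMap_qext
      ext x
      exact LinearMap.congr_fun (congrFun (congrArg AHom.f hm) i) x
end
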